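/- Let f : V → V' and g : V' → V'' be linear maps of finite-dimensional complex vector spaces with g ∘ f = 0, equipped with compatible endomorphisms T, T', T''. Let r > 0 avoid all eigenvalue absolute values of T, T', T''. If the sequence V → V' → V'' is exact at V', then the induced sequence V^{<r} → (V')^{<r} → (V'')^{<r} on the sums of generalized eigenspaces for eigenvalue absolute value < r is also exact at (V')^{<r}. -/

import Mathlib

/-!
For any predicate `P` on eigenvalues, a finite-dimensional complex space splits as
`V = V^P ⊕ V^¬P` into sums of generalized eigenspaces, and an intertwining map `f` sends each
summand into the corresponding summand of the target. Hence if `f y ∈ V'^P` with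
`y = y₁ + y₂ ∈ V^P ⊕ V^¬P`, then `f y₂ = f y - f y₁` lies in `V'^P ∩ V'^¬P = 0`, so
`range f ∩ V'^P = f (V^P)`; exactness at `V'` transfers to the summands.
-/

open Module

/-- The sum of the generalized eigenspaces of `T` for eigenvalues `μ` satisfying `P μ`. -/
noncomputable def sumGenEig {V : Type*} [AddCommGroup V] [Module ℂ V]
    (T : Module.End ℂ V) (P : ℂ → Prop) : Submodule ℂ V :=
  ⨆ μ ∈ {μ : ℂ | P μ}, T.maxGenEigenspace μ

lemma map_maxGenEigenspace_le {R M N : Type*} [CommRing R] [AddCommGroup M] [Module R M]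
    [AddCommGroup N] [Module R N] {f : M →ₗ[R] N} {T : End R M} {T' : End R N}
    (hfT : f ∘ₗ T = T' ∘ₗ f) (μ : R) :
    (T.maxGenEigenspace μ).map f ≤ T'.maxGenEigenspace μ := by
  have hsemi : Function.Semiconj f ⇑(T - μ • 1) ⇑(T' - μ • 1) := fun x => by
    simpa using congr($hfT x)
  rintro _ ⟨x, hx, rfl⟩
  obtain ⟨k, hk⟩ := (End.mem_maxGenEigenspace T μ x).mp hx
  refine (End.mem_maxGenEigenspace T' μ (f x)).mpr ⟨k, ?_⟩
  rw [End.pow_apply, ← hsemi.iterate_right k x, ← End.pow_apply, hk, map_zero]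

section SumGenEig

variable {V V' : Type*} [AddCommGroup V] [Module ℂ V] [AddCommGroup V'] [Module ℂ V']

lemma map_sumGenEig_le {f : V →ₗ[ℂ] V'} {T : End ℂ V} {T' : End ℂ V'}
    (hfT : f ∘ₗ T = T' ∘ₗ f) (P : ℂ → Prop) :
    (sumGenEig T P).map f ≤ sumGenEig T' P := by
  simp only [sumGenEig, Submodule.map_iSup]
  exact iSup₂_mono fun μ _ => map_maxGenEigenspace_le hfT μ

lemma disjoint_sumGenEig_not (T : End ℂ V) (P : ℂ → Prop) :
    Disjoint (sumGenEig T P) (sumGenEig T fun μ => ¬P μ) :=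
  T.independent_maxGenEigenspace.disjoint_biSup_biSup disjoint_compl_right

lemma sumGenEig_sup_not_eq_top [FiniteDimensional ℂ V] (T : End ℂ V) (P : ℂ → Prop) :
    sumGenEig T P ⊔ sumGenEig T (fun μ => ¬P μ) = ⊤ := by
  simp only [sumGenEig, Set.mem_ofPred_eq]
  rw [← iSup_split _ P]
  exact T.iSup_maxGenEigenspace_eq_top

lemma range_inf_sumGenEig_eq_map [FiniteDimensional ℂ V] {f : V →ₗ[ℂ] V'} {T : End ℂ V}
    {T' : End ℂ V'} (hfT : f ∘ₗ T = T' ∘ₗ f) (P : ℂ → Prop) :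
    LinearMap.range f ⊓ sumGenEig T' P = (sumGenEig T P).map f := by
  refine le_antisymm ?_ (le_inf LinearMap.map_le_range (map_sumGenEig_le hfT P))
  rintro _ ⟨⟨y, rfl⟩, hy⟩
  have hy_top : y ∈ sumGenEig T P ⊔ sumGenEig T (fun μ => ¬P μ) :=
    sumGenEig_sup_not_eq_top T P ▸ Submodule.mem_top
  obtain ⟨y₁, hy₁, y₂, hy₂, rfl⟩ := Submodule.mem_sup.mp hy_top
  have hfy₁ : f y₁ ∈ sumGenEig T' P := map_sumGenEig_le hfT P ⟨y₁, hy₁, rfl⟩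
  have hfy₂_not : f y₂ ∈ sumGenEig T' (fun μ => ¬P μ) := map_sumGenEig_le hfT _ ⟨y₂, hy₂, rfl⟩
  have hfy₂ : f y₂ ∈ sumGenEig T' P := by
    simpa using Submodule.sub_mem _ hy hfy₁
  have hzero : f y₂ = 0 :=
    Submodule.disjoint_def.mp (disjoint_sumGenEig_not T' P) _ hfy₂ hfy₂_not
  exact ⟨y₁, hy₁, by rw [map_add, hzero, add_zero]⟩

end SumGenEig

theorem stmt_12_general {V V' V'' : Type*}
    [AddCommGroup V] [Module ℂ V] [FiniteDimensional ℂ V]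
    [AddCommGroup V'] [Module ℂ V']
    [AddCommGroup V''] [Module ℂ V'']
    (f : V →ₗ[ℂ] V') (g : V' →ₗ[ℂ] V'')
    (T : Module.End ℂ V) (T' : Module.End ℂ V') (T'' : Module.End ℂ V'')
    (hfT : f ∘ₗ T = T' ∘ₗ f) (hgT : g ∘ₗ T' = T'' ∘ₗ g)
    (r : ℝ)
    (hex : LinearMap.ker g = LinearMap.range f) :
    (sumGenEig T (fun μ => ‖μ‖ < r)).map f
      ≤ sumGenEig T' (fun μ => ‖μ‖ < r) ∧
    (sumGenEig T' (fun μ => ‖μ‖ < r)).map g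
      ≤ sumGenEig T'' (fun μ => ‖μ‖ < r) ∧
    sumGenEig T' (fun μ => ‖μ‖ < r) ⊓ LinearMap.ker g
      = (sumGenEig T (fun μ => ‖μ‖ < r)).map f :=
  ⟨map_sumGenEig_le hfT _, map_sumGenEig_le hgT _,
    by rw [hex, inf_comm, range_inf_sumGenEig_eq_map hfT]⟩

theorem stmt_12 {V V' V'' : Type*}
    [AddCommGroup V] [Module ℂ V] [FiniteDimensional ℂ V]
    [AddCommGroup V'] [Module ℂ V'] [FiniteDimensional ℂ V']
    [AddCommGroup V''] [Module ℂ V''] [FiniteDimensional ℂ V'']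
    (f : V →ₗ[ℂ] V') (g : V' →ₗ[ℂ] V'')
    (T : Module.End ℂ V) (T' : Module.End ℂ V') (T'' : Module.End ℂ V'')
    (hfT : f ∘ₗ T = T' ∘ₗ f) (hgT : g ∘ₗ T' = T'' ∘ₗ g)
    (r : ℝ) (hr : 0 < r)
    (hEig : ∀ μ : ℂ, T.HasEigenvalue μ → ‖μ‖ ≠ r)
    (hEig' : ∀ μ : ℂ, T'.HasEigenvalue μ → ‖μ‖ ≠ r)
    (hEig'' : ∀ μ : ℂ, T''.HasEigenvalue μ → ‖μ‖ ≠ r)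
    (hgf : g ∘ₗ f = 0) (hex : LinearMap.ker g = LinearMap.range f) :
    (sumGenEig T (fun μ => ‖μ‖ < r)).map f
      ≤ sumGenEig T' (fun μ => ‖μ‖ < r) ∧
    (sumGenEig T' (fun μ => ‖μ‖ < r)).map g
      ≤ sumGenEig T'' (fun μ => ‖μ‖ < r) ∧
    sumGenEig T' (fun μ => ‖μ‖ < r) ⊓ LinearMap.ker g
      = (sumGenEig T (fun μ => ‖μ‖ < r)).map f :=
  stmt_12_general f g T T' T'' hfT hgT r hex
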